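/- Let E, E_j ∈ (-2,2) with E = 2cos(πk), E_j = 2cos(πk_j), k, k_j ∈ (0,1), and assume E_j ≠ E and E_j ≠ -E (equivalently k + k_j ∉ ℤ and k - k_j ∉ ℤ). Let b ∈ ℕ, K > 0, and let V : ℕ → ℝ satisfy |V(n)| ≤ K/(n-b), |V(n)/sin(πk)| < 1/2, and |V(n)/sin(πk_j)| < 1/2 for all n > b. Let θ(n) and θ_j(n) be the Prüfer angles of solutions of the eigen-equations with energies E and E_j respectively. Then there exists a constant C (depending only on E, E_j and K) such that for all n > n₀ > b, |∑_{l=n₀}^{n} sin(2πθ(l))·sin(2πθ_j(l))/(l-b)| ≤ C/(n₀-b). -/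

import Mathlib

noncomputable section

/-- `u` solves the eigen-equation `u(n+1) + u(n-1) + V(n)u(n) = E·u(n)` for all `n ≥ 1`. -/
def EigenEq (V : ℕ → ℝ) (E : ℝ) (u : ℕ → ℝ) : Prop :=
  ∀ n : ℕ, 1 ≤ n → u (n + 1) + u (n - 1) + V n * u n = E * u n

/-- `(R, θ)` are modified Prüfer variables (radius and angle) of the solution `u`,
with quasimomentum `k`: `u(n-1) = R(n)·sin(πθ(n) - πk)` and
`(u(n) - cos(πk)·u(n-1))/sin(πk) = R(n)·cos(πθ(n) - πk)`, with `R(n) > 0`. -/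
def PruferRel (k : ℝ) (u R θ : ℕ → ℝ) : Prop :=
  ∀ n : ℕ, 1 ≤ n → 0 < R n ∧
    u (n - 1) = R n * Real.sin (Real.pi * θ n - Real.pi * k) ∧
    (u n - Real.cos (Real.pi * k) * u (n - 1)) / Real.sin (Real.pi * k)
      = R n * Real.cos (Real.pi * θ n - Real.pi * k)

/-- The Prüfer angle is chosen along the continuous branch:
`θ(n+1) - θ(n) - k ∈ (-1/2, 1/2)`. -/
def BranchCond (k : ℝ) (θ : ℕ → ℝ) : Prop :=
  ∀ n : ℕ, 1 ≤ n → |θ (n + 1) - θ n - k| < 1 / 2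

/-!
Since `sin(2πθ) sin(2πθⱼ) = (cos 2π(θ - θⱼ) - cos 2π(θ + θⱼ)) / 2`, it suffices to bound
`∑ cos(2πφ(l)) / (l - b)` for the phases `φ = θ ∓ θⱼ`. Clearing denominators in the Prüfer
recursion gives `|θ(l+1) - θ(l) - k| ≤ |V(l)| / (2 sin πk)`, so `φ` advances by `κ = k ∓ kⱼ` up to
`O(1/(l - b))`, and non-resonance says exactly that `w = e^{2πiκ} ≠ 1`. For `z(l) = e^{2πiφ(l)}`,
`(w - 1) z(l) = (z(l+1) - z(l)) - (z(l+1) - w z(l))`: summation by parts bounds the weighted sum of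
the increments by `2/(n₀ - b)`, and the defects are `O(1/(l - b))`, so their weighted sum is
`O(∑ 1/(l - b)²) = O(1/(n₀ - b))`.
-/

open Finset Real

theorem norm_sum_smul_sub_le {E : Type*} [SeminormedAddCommGroup E] [NormedSpace ℝ E]
    {f : ℕ → E} {a : ℕ → ℝ} {m : ℕ} (hf : ∀ l, m ≤ l → ‖f l‖ ≤ 1)
    (ha : ∀ l, m ≤ l → 0 ≤ a l) (hanti : ∀ l, m ≤ l → a (l + 1) ≤ a l) {n : ℕ} (hmn : m ≤ n) :
    ‖∑ l ∈ Icc m n, a l • (f (l + 1) - f l)‖ ≤ 2 * a m := by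
  have hlast : ∀ l, m ≤ l → ‖a l • f (l + 1)‖ ≤ a l := fun l hl => by
    rw [norm_smul, Real.norm_of_nonneg (ha l hl)]
    exact mul_le_of_le_one_right (ha l hl) (hf _ (by omega))
  have key : ‖∑ l ∈ Icc m n, a l • (f (l + 1) - f l) - a n • f (n + 1)‖ ≤ 2 * a m - a n := by
    induction n, hmn using Nat.le_induction with
    | base =>
      rw [Icc_self, sum_singleton, smul_sub, sub_sub_cancel_left, norm_neg, norm_smul,
        Real.norm_of_nonneg (ha m le_rfl)]
      linarith [mul_le_of_le_one_right (ha m le_rfl) (hf m le_rfl)]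
    | succ n hmn ih =>
      have hdrop := sub_nonneg.2 (hanti n hmn)
      calc ‖∑ l ∈ Icc m (n + 1), a l • (f (l + 1) - f l) - a (n + 1) • f (n + 1 + 1)‖
          = ‖(∑ l ∈ Icc m n, a l • (f (l + 1) - f l) - a n • f (n + 1))
              + (a n - a (n + 1)) • f (n + 1)‖ := by
            rw [sum_Icc_succ_top (by omega), sub_smul, smul_sub]
            congr 1; abel
        _ ≤ (2 * a m - a n) + (a n - a (n + 1)) := by
          refine norm_add_le_of_le ih ?_
          rw [norm_smul, Real.norm_of_nonneg hdrop]
          exact mul_le_of_le_one_right hdrop (hf _ (by omega))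
        _ = 2 * a m - a (n + 1) := by ring
  linarith [norm_le_insert' (∑ l ∈ Icc m n, a l • (f (l + 1) - f l)) (a n • f (n + 1)),
    hlast n hmn]

theorem sum_inv_sub_sq_le {b m : ℕ} (hbm : b < m) (n : ℕ) :
    ∑ l ∈ Icc m n, (((l : ℝ) - b) ^ 2)⁻¹ ≤ 2 / ((m : ℝ) - b) := by
  have hsub : Icc m n ⊆ (Ioo (m - b - 1) (n + 1)).map (addRightEmbedding b) := fun l hl => by
    simp only [mem_Icc] at hl
    simp only [mem_map, mem_Ioo, addRightEmbedding_apply]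
    exact ⟨l - b, by omega, by omega⟩
  calc ∑ l ∈ Icc m n, (((l : ℝ) - b) ^ 2)⁻¹
      ≤ ∑ l ∈ (Ioo (m - b - 1) (n + 1)).map (addRightEmbedding b), (((l : ℝ) - b) ^ 2)⁻¹ :=
        sum_le_sum_of_subset_of_nonneg hsub fun _ _ _ => by positivity
    _ = ∑ i ∈ Ioo (m - b - 1) (n + 1), ((i : ℝ) ^ 2)⁻¹ := by
        simp only [sum_map, addRightEmbedding_apply, Nat.cast_add, add_sub_cancel_right]
    _ ≤ 2 / (((m - b - 1 : ℕ) : ℝ) + 1) := sum_Ioo_inv_sq_le _ _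
    _ = 2 / ((m : ℝ) - b) := by
        rw [Nat.cast_sub (by omega), Nat.cast_sub hbm.le]
        ring_nf

theorem norm_exp_mul_I_sub_exp_mul_I_le (x y : ℝ) :
    ‖Complex.exp (x * Complex.I) - Complex.exp (y * Complex.I)‖ ≤ |x - y| := by
  have hfactor : Complex.exp (x * Complex.I) - Complex.exp (y * Complex.I)
      = Complex.exp (y * Complex.I) * (Complex.exp (Complex.I * (x - y : ℝ)) - 1) := by
    rw [mul_sub, ← Complex.exp_add]
    push_cast
    ring_nf
  rw [hfactor, norm_mul, Complex.norm_exp_ofReal_mul_I, one_mul]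
  exact Real.norm_exp_I_mul_ofReal_sub_one_le

theorem exp_two_pi_mul_I_ne_one {κ : ℝ} (h : ∀ m : ℤ, κ ≠ m) :
    Complex.exp ((2 * π * κ : ℝ) * Complex.I) ≠ 1 := by
  rw [Ne, Complex.exp_eq_one_iff]
  rintro ⟨m, hm⟩
  have hcast : ((2 * π * κ : ℝ) : ℂ) = ((2 * π * m : ℝ) : ℂ) := by
    apply mul_right_cancel₀ Complex.I_ne_zero
    rw [hm]
    push_cast
    ring
  exact h m (mul_left_cancel₀ (by positivity) (Complex.ofReal_injective hcast))

theorem norm_sub_one_mul_norm_sum_le {z : ℕ → ℂ} {a : ℕ → ℝ} {m : ℕ} (w : ℂ)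
    (hz : ∀ l, m ≤ l → ‖z l‖ ≤ 1) (ha : ∀ l, m ≤ l → 0 ≤ a l)
    (hanti : ∀ l, m ≤ l → a (l + 1) ≤ a l) {n : ℕ} (hmn : m ≤ n) :
    ‖w - 1‖ * ‖∑ l ∈ Icc m n, a l • z l‖
      ≤ 2 * a m + ∑ l ∈ Icc m n, a l * ‖z (l + 1) - w * z l‖ := by
  have hsplit : (w - 1) * ∑ l ∈ Icc m n, a l • z l
      = ∑ l ∈ Icc m n, a l • (z (l + 1) - z l) - ∑ l ∈ Icc m n, a l • (z (l + 1) - w * z l) := by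
    rw [mul_sum, ← sum_sub_distrib]
    refine sum_congr rfl fun l _ => ?_
    simp only [Complex.real_smul]
    ring
  rw [← norm_mul, hsplit]
  refine (norm_sub_le _ _).trans (add_le_add (norm_sum_smul_sub_le hz ha hanti hmn) ?_)
  refine (norm_sum_le _ _).trans (sum_le_sum fun l hl => ?_)
  rw [norm_smul, Real.norm_of_nonneg (ha l (mem_Icc.1 hl).1)]

theorem abs_sum_cos_div_le {κ M : ℝ} {φ : ℕ → ℝ} {b m : ℕ} (hM : 0 ≤ M) (hbm : b < m)
    (hw : Complex.exp ((2 * π * κ : ℝ) * Complex.I) ≠ 1)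
    (hstep : ∀ l, b < l → |φ (l + 1) - φ l - κ| ≤ M / ((l : ℝ) - b)) {n : ℕ} (hmn : m ≤ n) :
    |∑ l ∈ Icc m n, cos (2 * π * φ l) / ((l : ℝ) - b)|
      ≤ (2 + 4 * π * M) / ‖Complex.exp ((2 * π * κ : ℝ) * Complex.I) - 1‖ / ((m : ℝ) - b) := by
  set w := Complex.exp ((2 * π * κ : ℝ) * Complex.I)
  set z : ℕ → ℂ := fun l => Complex.exp ((2 * π * φ l : ℝ) * Complex.I)
  set a : ℕ → ℝ := fun l => ((l : ℝ) - b)⁻¹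
  have hpos : ∀ l, b < l → 0 < (l : ℝ) - b := fun l hl => sub_pos.2 (by exact_mod_cast hl)
  have ha : ∀ l, m ≤ l → 0 ≤ a l := fun l hl => (inv_pos.2 (hpos l (by omega))).le
  have hanti : ∀ l, m ≤ l → a (l + 1) ≤ a l := fun l hl =>
    inv_anti₀ (hpos l (by omega)) (by push_cast; linarith)
  have hdefect : ∀ l, m ≤ l → ‖z (l + 1) - w * z l‖ ≤ 2 * π * M * a l := fun l hl => by
    calc ‖z (l + 1) - w * z l‖ ≤ |2 * π * φ (l + 1) - (2 * π * κ + 2 * π * φ l)| := by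
          simp only [z, w, ← Complex.exp_add, ← add_mul, ← Complex.ofReal_add]
          exact norm_exp_mul_I_sub_exp_mul_I_le _ _
      _ = 2 * π * |φ (l + 1) - φ l - κ| := by
          rw [show 2 * π * φ (l + 1) - (2 * π * κ + 2 * π * φ l)
              = 2 * π * (φ (l + 1) - φ l - κ) by ring, abs_mul, abs_of_pos two_pi_pos]
      _ ≤ 2 * π * (M * a l) := by
          gcongr
          exact (hstep l (by omega)).trans_eq (div_eq_mul_inv _ _)
      _ = 2 * π * M * a l := by ring
  have hdefects : ∑ l ∈ Icc m n, a l * ‖z (l + 1) - w * z l‖ ≤ 4 * π * M * a m :=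
    calc ∑ l ∈ Icc m n, a l * ‖z (l + 1) - w * z l‖
        ≤ ∑ l ∈ Icc m n, 2 * π * M * (((l : ℝ) - b) ^ 2)⁻¹ := by
          refine sum_le_sum fun l hl => ?_
          have hl := (mem_Icc.1 hl).1
          calc a l * ‖z (l + 1) - w * z l‖ ≤ a l * (2 * π * M * a l) :=
                mul_le_mul_of_nonneg_left (hdefect l hl) (ha l hl)
            _ = 2 * π * M * (((l : ℝ) - b) ^ 2)⁻¹ := by simp only [a]; rw [← inv_pow]; ring
      _ ≤ 2 * π * M * (2 / ((m : ℝ) - b)) := by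
          rw [← mul_sum]
          gcongr
          exact sum_inv_sub_sq_le hbm n
      _ = 4 * π * M * a m := by simp only [a]; ring
  have hre : ∑ l ∈ Icc m n, cos (2 * π * φ l) / ((l : ℝ) - b) = (∑ l ∈ Icc m n, a l • z l).re := by
    simp only [Complex.re_sum, Complex.smul_re, Complex.exp_ofReal_mul_I_re, a, z, smul_eq_mul]
    exact sum_congr rfl fun l _ => div_eq_inv_mul _ _
  have hbound := norm_sub_one_mul_norm_sum_le (z := z) w
    (fun l _ => (Complex.norm_exp_ofReal_mul_I _).le) ha hanti hmn
  calc |∑ l ∈ Icc m n, cos (2 * π * φ l) / ((l : ℝ) - b)| ≤ ‖∑ l ∈ Icc m n, a l • z l‖ := by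
        rw [hre]
        exact Complex.abs_re_le_norm _
    _ ≤ (2 + 4 * π * M) * a m / ‖w - 1‖ := by
        rw [le_div_iff₀ (norm_pos_iff.2 (sub_ne_zero.2 hw))]
        linarith
    _ = (2 + 4 * π * M) / ‖w - 1‖ / ((m : ℝ) - b) := by simp only [a]; ring

theorem two_mul_abs_le_abs_sin_pi_mul {δ : ℝ} (hδ : |δ| ≤ 1 / 2) : 2 * |δ| ≤ |sin (π * δ)| := by
  have hjordan := mul_abs_le_abs_sin (x := π * δ)
    (by rw [abs_mul, abs_of_pos pi_pos]; linarith [mul_le_mul_of_nonneg_left hδ pi_pos.le])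
  rwa [abs_mul, abs_of_pos pi_pos, ← mul_assoc, div_mul_cancel₀ _ pi_ne_zero] at hjordan

theorem sin_pi_mul_pos {k : ℝ} (hk : k ∈ Set.Ioo (0 : ℝ) 1) : 0 < sin (π * k) :=
  sin_pos_of_pos_of_lt_pi (mul_pos pi_pos hk.1) (by nlinarith [pi_pos, hk.2])

namespace PruferRel

variable {k : ℝ} {V u R θ : ℕ → ℝ}

theorem apply_eq (hpr : PruferRel k u R θ) (hs : sin (π * k) ≠ 0) {n : ℕ} (hn : 1 ≤ n) :
    u n = R n * sin (π * θ n) := by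
  obtain ⟨-, hprev, hcur⟩ := hpr n hn
  rw [div_eq_iff hs] at hcur
  rw [show π * θ n = (π * θ n - π * k) + π * k by ring, sin_add]
  linear_combination hcur + cos (π * k) * hprev

/-- The recursion `cot(πθ(n+1) - πk) = cot(πθ(n)) - V(n)/sin(πk)` with denominators cleared. -/
theorem sin_mul_sin_step (heig : EigenEq V (2 * cos (π * k)) u) (hpr : PruferRel k u R θ)
    (hs : sin (π * k) ≠ 0) {n : ℕ} (hn : 1 ≤ n) :
    sin (π * k) * sin (π * (θ (n + 1) - θ n - k))
      = V n * sin (π * θ (n + 1) - π * k) * sin (π * θ n) := by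
  obtain ⟨hR, hprev, -⟩ := hpr n hn
  have hcur := (hpr (n + 1) (by omega)).2.1
  rw [Nat.add_sub_cancel, hpr.apply_eq hs hn] at hcur
  have heq := heig n hn
  rw [hpr.apply_eq hs (n := n + 1) (by omega), hprev, hpr.apply_eq hs hn,
    show π * θ (n + 1) = (π * θ (n + 1) - π * k) + π * k by ring] at heq
  rw [show π * (θ (n + 1) - θ n - k) = (π * θ (n + 1) - π * k) - π * θ n by ring]
  generalize π * θ (n + 1) - π * k = y at heq hcur ⊢
  generalize π * θ n = x at heq hcur ⊢
  generalize π * k = p at heq ⊢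
  simp only [sin_add, sin_sub] at heq ⊢
  refine mul_left_cancel₀ hR.ne' ?_
  linear_combination (-sin y) * heq - (sin y * cos p + cos y * sin p) * hcur

theorem abs_step_le (heig : EigenEq V (2 * cos (π * k)) u) (hpr : PruferRel k u R θ)
    (hbr : BranchCond k θ) (hs : 0 < sin (π * k)) {n : ℕ} (hn : 1 ≤ n) :
    |θ (n + 1) - θ n - k| ≤ |V n| / (2 * sin (π * k)) := by
  have hsin : sin (π * k) * |sin (π * (θ (n + 1) - θ n - k))| ≤ |V n| := by
    rw [← abs_of_pos hs, ← abs_mul, hpr.sin_mul_sin_step heig hs.ne' hn, abs_mul, abs_mul]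
    calc |V n| * |sin (π * θ (n + 1) - π * k)| * |sin (π * θ n)| ≤ |V n| * 1 * 1 := by
          gcongr <;> exact abs_sin_le_one _
      _ = |V n| := by ring
  rw [le_div_iff₀ (by positivity)]
  nlinarith [two_mul_abs_le_abs_sin_pi_mul (hbr n hn).le]

theorem abs_step_le_of_decay (heig : EigenEq V (2 * cos (π * k)) u) (hpr : PruferRel k u R θ)
    (hbr : BranchCond k θ) (hs : 0 < sin (π * k)) {b : ℕ} {K : ℝ}
    (hV : ∀ n : ℕ, b < n → |V n| ≤ K / ((n : ℝ) - b)) {n : ℕ} (hn : b < n) :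
    |θ (n + 1) - θ n - k| ≤ K / (2 * sin (π * k)) / ((n : ℝ) - b) := by
  refine (hpr.abs_step_le heig hbr hs (by omega)).trans ?_
  rw [div_right_comm]
  gcongr
  exact hV n hn

end PruferRel

theorem sub_ne_int_of_cos_ne {k kj : ℝ} (hk : k ∈ Set.Ioo (0 : ℝ) 1)
    (hkj : kj ∈ Set.Ioo (0 : ℝ) 1) (hne : cos (π * kj) ≠ cos (π * k)) (m : ℤ) : k - kj ≠ m := by
  intro hm
  obtain rfl : m = 0 := by
    have h1 : ((-1 : ℤ) : ℝ) < m := by push_cast; linarith [hk.1, hkj.2]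
    have h2 : (m : ℝ) < ((1 : ℤ) : ℝ) := by push_cast; linarith [hk.2, hkj.1]
    have := Int.cast_lt.1 h1
    have := Int.cast_lt.1 h2
    omega
  exact hne (by rw [show kj = k by push_cast at hm; linarith])

theorem add_ne_int_of_cos_ne_neg {k kj : ℝ} (hk : k ∈ Set.Ioo (0 : ℝ) 1)
    (hkj : kj ∈ Set.Ioo (0 : ℝ) 1) (hne : cos (π * kj) ≠ -cos (π * k)) (m : ℤ) :
    k + kj ≠ m := by
  intro hm
  obtain rfl : m = 1 := by
    have h1 : ((0 : ℤ) : ℝ) < m := by push_cast; linarith [hk.1, hkj.1]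
    have h2 : (m : ℝ) < ((2 : ℤ) : ℝ) := by push_cast; linarith [hk.2, hkj.2]
    have := Int.cast_lt.1 h1
    have := Int.cast_lt.1 h2
    omega
  refine hne ?_
  rw [show π * kj = π - π * k by push_cast at hm; linear_combination π * hm, cos_pi_sub]

theorem sin_mul_sin_eq (x y : ℝ) : sin x * sin y = (cos (x - y) - cos (x + y)) / 2 := by
  rw [cos_sub, cos_add]
  ring

theorem abs_sum_sin_mul_sin_div_le (s : Finset ℕ) (x y c : ℕ → ℝ) :
    |∑ l ∈ s, sin (2 * π * x l) * sin (2 * π * y l) / c l|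
      ≤ (|∑ l ∈ s, cos (2 * π * (x l - y l)) / c l|
          + |∑ l ∈ s, cos (2 * π * (x l + y l)) / c l|) / 2 := by
  have hsplit : ∑ l ∈ s, sin (2 * π * x l) * sin (2 * π * y l) / c l
      = (∑ l ∈ s, cos (2 * π * (x l - y l)) / c l
          - ∑ l ∈ s, cos (2 * π * (x l + y l)) / c l) / 2 := by
    rw [← sum_sub_distrib, sum_div]
    refine sum_congr rfl fun l _ => ?_
    rw [sin_mul_sin_eq, ← mul_sub, ← mul_add]
    ring
  rw [hsplit, abs_div, abs_two]
  gcongr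
  exact abs_sub _ _

theorem oscillatory_sum_product_general (E k Ej kj : ℝ)
    (hk : k ∈ Set.Ioo (0 : ℝ) 1) (hkj : kj ∈ Set.Ioo (0 : ℝ) 1)
    (hEk : E = 2 * Real.cos (Real.pi * k)) (hEjk : Ej = 2 * Real.cos (Real.pi * kj))
    (hne : Ej ≠ E) (hne' : Ej ≠ -E)
    (b : ℕ) (K : ℝ) (hK : 0 < K) :
    ∃ C : ℝ, 0 < C ∧ ∀ V u R θ uj Rj θj : ℕ → ℝ,
      (∀ n : ℕ, b < n → |V n| ≤ K / ((n : ℝ) - (b : ℝ))) →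
      (∀ n : ℕ, b < n → |V n / Real.sin (Real.pi * k)| < 1 / 2) →
      (∀ n : ℕ, b < n → |V n / Real.sin (Real.pi * kj)| < 1 / 2) →
      u ≠ 0 → EigenEq V E u → PruferRel k u R θ → BranchCond k θ →
      uj ≠ 0 → EigenEq V Ej uj → PruferRel kj uj Rj θj → BranchCond kj θj →
      ∀ n₀ n : ℕ, b < n₀ → n₀ < n →
        |∑ l ∈ Finset.Icc n₀ n,
            Real.sin (2 * Real.pi * θ l) * Real.sin (2 * Real.pi * θj l)
              / ((l : ℝ) - (b : ℝ))|
          ≤ C / ((n₀ : ℝ) - (b : ℝ)) := by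
  subst hEk hEjk
  have hs := sin_pi_mul_pos hk
  have hsj := sin_pi_mul_pos hkj
  have hw_sub := exp_two_pi_mul_I_ne_one (sub_ne_int_of_cos_ne hk hkj fun h => hne (by rw [h]))
  have hw_add := exp_two_pi_mul_I_ne_one
    (add_ne_int_of_cos_ne_neg hk hkj fun h => hne' (by rw [h]; ring))
  set M := K / (2 * sin (π * k)) + K / (2 * sin (π * kj))
  have hM : 0 ≤ M := by positivity
  refine ⟨(2 + 4 * π * M) / ‖Complex.exp ((2 * π * (k - kj) : ℝ) * Complex.I) - 1‖ / 2
    + (2 + 4 * π * M) / ‖Complex.exp ((2 * π * (k + kj) : ℝ) * Complex.I) - 1‖ / 2,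
    by have := norm_pos_iff.2 (sub_ne_zero.2 hw_sub); positivity, ?_⟩
  intro V u R θ uj Rj θj hV _ _ _ heig hpr hbr _ heigj hprj hbrj n₀ n hbn₀ hn₀n
  have hstep : ∀ l, b < l →
      |θ (l + 1) - θ l - k| + |θj (l + 1) - θj l - kj| ≤ M / ((l : ℝ) - b) := fun l hl =>
    (add_le_add (hpr.abs_step_le_of_decay heig hbr hs hV hl)
      (hprj.abs_step_le_of_decay heigj hbrj hsj hV hl)).trans_eq (add_div _ _ _).symm
  have hsum_sub := abs_sum_cos_div_le (φ := fun l => θ l - θj l) hM hbn₀ hw_sub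
    (fun l hl => (abs_sub _ _).trans' (le_of_eq (by congr 1; ring)) |>.trans (hstep l hl))
    hn₀n.le
  have hsum_add := abs_sum_cos_div_le (φ := fun l => θ l + θj l) hM hbn₀ hw_add
    (fun l hl => (abs_add_le _ _).trans' (le_of_eq (by congr 1; ring)) |>.trans (hstep l hl))
    hn₀n.le
  beta_reduce at hsum_sub hsum_add
  grw [abs_sum_sin_mul_sin_div_le, hsum_sub, hsum_add]
  exact le_of_eq (by ring)

/-- Oscillatory sum estimate (Lemma 4.2, second bound): for Prüfer angles `θ`, `θj` of
solutions at two non-resonant energies `E = 2cos(πk)` and `Ej = 2cos(πkj)`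
(`Ej ≠ E` and `Ej ≠ -E`), with `|V(n)| ≤ K/(n-b)`, the weighted sums of
`sin(2πθ(l))·sin(2πθj(l))/(l-b)` are bounded by `C(E,Ej,K)/(n₀-b)`. -/
theorem oscillatory_sum_product (E k Ej kj : ℝ)
    (hE : E ∈ Set.Ioo (-2 : ℝ) 2) (hEj : Ej ∈ Set.Ioo (-2 : ℝ) 2)
    (hk : k ∈ Set.Ioo (0 : ℝ) 1) (hkj : kj ∈ Set.Ioo (0 : ℝ) 1)
    (hEk : E = 2 * Real.cos (Real.pi * k)) (hEjk : Ej = 2 * Real.cos (Real.pi * kj))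
    (hne : Ej ≠ E) (hne' : Ej ≠ -E)
    (b : ℕ) (K : ℝ) (hK : 0 < K) :
    ∃ C : ℝ, 0 < C ∧ ∀ V u R θ uj Rj θj : ℕ → ℝ,
      (∀ n : ℕ, b < n → |V n| ≤ K / ((n : ℝ) - (b : ℝ))) →
      (∀ n : ℕ, b < n → |V n / Real.sin (Real.pi * k)| < 1 / 2) →
      (∀ n : ℕ, b < n → |V n / Real.sin (Real.pi * kj)| < 1 / 2) →
      u ≠ 0 → EigenEq V E u → PruferRel k u R θ → BranchCond k θ →
      uj ≠ 0 → EigenEq V Ej uj → PruferRel kj uj Rj θj → BranchCond kj θj →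
      ∀ n₀ n : ℕ, b < n₀ → n₀ < n →
        |∑ l ∈ Finset.Icc n₀ n,
            Real.sin (2 * Real.pi * θ l) * Real.sin (2 * Real.pi * θj l)
              / ((l : ℝ) - (b : ℝ))|
          ≤ C / ((n₀ : ℝ) - (b : ℝ)) :=
  oscillatory_sum_product_general E k Ej kj hk hkj hEk hEjk hne hne' b K hK
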